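/- Let f: ℝⁿ → [0,∞) be convex, superlinear (f(ξ)/|ξ| → ∞ as |ξ| → ∞), C² outside a ball B_{t₀}(0), and satisfy h₁(|ξ|)|λ|² ≤ ⟨D²f(ξ)λ, λ⟩ ≤ h₂(|ξ|)|λ|² for |ξ| ≥ t₀ with h₁ > 0 increasing. Then the Fenchel conjugate f*(x) = sup_ξ (x·ξ − f(ξ)) is finite everywhere, and there exists s₀ such that f* is C² on ℝⁿ \ B_{s₀}(0) with D²f*(x) = (D²f)⁻¹(Df*(x)) and (1/h₂(|Df*(x)|))|λ|² ≤ ⟨D²f*(x)λ, λ⟩ ≤ (1/h₁(|Df*(x)|))|λ|² for |x| ≥ s₀. -/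

import Mathlib

open scoped RealInnerProductSpace
open Filter Set Topology

private lemma aux_exists_max {F : Type*} [NormedAddCommGroup F] [InnerProductSpace ℝ F]
    [FiniteDimensional ℝ F] {f : F → ℝ} (hcont : Continuous f)
    (hsuper : Tendsto (fun ξ : F => f ξ / ‖ξ‖) (comap norm atTop) atTop) (x : F) :
    ∃ ξ, ∀ η, ⟪x, η⟫ - f η ≤ ⟪x, ξ⟫ - f ξ := by
  have h1 : ∀ᶠ ξ : F in comap norm atTop, ‖x‖ + 1 ≤ f ξ / ‖ξ‖ :=
    hsuper.eventually (eventually_ge_atTop _)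
  rw [eventually_comap, eventually_atTop] at h1
  obtain ⟨R, hR⟩ := h1
  set R' := max (max R 1) (f 0 + 1) with hR'def
  have h1R' : (1:ℝ) ≤ R' := le_max_of_le_left (le_max_right R 1)
  have hR'0 : 0 ≤ R' := le_trans zero_le_one h1R'
  have hcφ : Continuous fun η : F => ⟪x, η⟫ - f η :=
    (continuous_const.inner continuous_id).sub hcont
  obtain ⟨ξ, hξmem, hξ⟩ := (isCompact_closedBall (0 : F) R').exists_isMaxOn
    ⟨0, Metric.mem_closedBall_self hR'0⟩ hcφ.continuousOn
  refine ⟨ξ, fun η => ?_⟩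
  rcases le_or_gt ‖η‖ R' with hle | hgt
  · exact hξ (by simpa [Metric.mem_closedBall, dist_eq_norm] using hle)
  · have hηR : R ≤ ‖η‖ := le_trans (le_max_of_le_left (le_max_left R 1)) hgt.le
    have hf : ‖x‖ + 1 ≤ f η / ‖η‖ := hR ‖η‖ hηR η rfl
    have hηpos : (0:ℝ) < ‖η‖ := lt_of_lt_of_le (lt_of_lt_of_le zero_lt_one h1R') hgt.le
    have hfη : (‖x‖ + 1) * ‖η‖ ≤ f η := by
      exact (le_div_iff₀ hηpos).1 hf
    have h2 : ⟪x, η⟫ - f η ≤ -‖η‖ := by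
      have := real_inner_le_norm x η
      nlinarith
    have h3 : -‖η‖ < ⟪x, (0:F)⟫ - f 0 := by
      rw [inner_zero_right]
      have : f 0 + 1 ≤ R' := le_max_right _ _
      nlinarith
    have h4 : ⟪x, (0:F)⟫ - f 0 ≤ ⟪x, ξ⟫ - f ξ := hξ (Metric.mem_closedBall_self hR'0)
    linarith

private lemma aux_tangent {F : Type*} [NormedAddCommGroup F] [InnerProductSpace ℝ F]
    {f : F → ℝ} (hconv : ConvexOn ℝ Set.univ f) {ξ : F} {φ : F →L[ℝ] ℝ}
    (hd : HasFDerivAt f φ ξ) (η : F) : f ξ + φ (η - ξ) ≤ f η := by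
  set d := η - ξ with hd_def
  set q : ℝ → ℝ := fun t => f (ξ + t • d) with hq_def
  have hq01 : ∀ t ∈ Ioc (0:ℝ) 1, (q t - q 0) / t ≤ q 1 - q 0 := by
    rintro t ⟨ht0, ht1⟩
    have hcvx := hconv.2 (mem_univ ξ) (mem_univ η) (show (0:ℝ) ≤ 1 - t by linarith) ht0.le (by ring)
    have hpt : (1 - t) • ξ + t • η = ξ + t • d := by
      rw [hd_def]; module
    rw [hpt] at hcvx
    have hq0 : q 0 = f ξ := by simp [hq_def]
    have hq1 : q 1 = f η := by simp [hq_def, hd_def]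
    rw [div_le_iff₀ ht0, hq0, hq1]
    have : q t ≤ (1 - t) * f ξ + t * f η := by simpa [smul_eq_mul] using hcvx
    nlinarith
  have hqderiv : HasDerivAt q (φ d) 0 := by
    have hc : HasDerivAt (fun t : ℝ => ξ + t • d) d 0 := by
      simpa using ((hasDerivAt_id (0:ℝ)).smul_const d).const_add ξ
    have hdξ : HasFDerivAt f φ (ξ + (0:ℝ) • d) := by simpa using hd
    exact hdξ.comp_hasDerivAt (0:ℝ) hc
  have hslope : Tendsto (slope q 0) (𝓝[>] (0:ℝ)) (𝓝 (φ d)) :=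
    (hasDerivAt_iff_tendsto_slope.1 hqderiv).mono_left
      (nhdsWithin_mono _ (fun t ht => ne_of_gt ht))
  have hev : ∀ᶠ t in 𝓝[>] (0:ℝ), slope q 0 t ≤ q 1 - q 0 := by
    filter_upwards [Ioc_mem_nhdsGT_of_mem (Set.left_mem_Ico.2 zero_lt_one)] with t ht
    rw [slope_def_field]
    simpa [div_eq_inv_mul] using hq01 t ht
  have hle : φ d ≤ q 1 - q 0 := le_of_tendsto hslope hev
  have hq0 : q 0 = f ξ := by simp [hq_def]
  have hq1 : q 1 = f η := by simp [hq_def, hd_def]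
  rw [hq0, hq1] at hle
  linarith

private lemma aux_cs {F : Type*} [NormedAddCommGroup F] [InnerProductSpace ℝ F]
    (B : F →L[ℝ] F) (hsym : ∀ v w : F, ⟪B v, w⟫ = ⟪B w, v⟫) (hpsd : ∀ v : F, 0 ≤ ⟪B v, v⟫)
    (v w : F) : ⟪B v, w⟫ ^ 2 ≤ ⟪B v, v⟫ * ⟪B w, w⟫ := by
  have key : ∀ t : ℝ, 0 ≤ ⟪B w, w⟫ * (t * t) + (2 * ⟪B v, w⟫) * t + ⟪B v, v⟫ := by
    intro t
    have h := hpsd (v + t • w)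
    have hexp : ⟪B (v + t • w), v + t • w⟫
        = ⟪B w, w⟫ * (t * t) + (2 * ⟪B v, w⟫) * t + ⟪B v, v⟫ := by
    
      rw [map_add, map_smul, inner_add_left, inner_add_right, inner_add_right,
        real_inner_smul_left, real_inner_smul_left, real_inner_smul_right,
        real_inner_smul_right, hsym w v]
      ring
    linarith [hexp ▸ h]
  have hd := discrim_le_zero key
  rw [discrim] at hd
  nlinarith

private lemma aux_bounds {F : Type*} [NormedAddCommGroup F] [InnerProductSpace ℝ F]
    (H A : F →L[ℝ] F) (hHA : ∀ v, H (A v) = v)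
    (hsym : ∀ v w : F, ⟪H v, w⟫ = ⟪H w, v⟫) {a b : ℝ} (ha : 0 < a)
    (hlow : ∀ w : F, a * ‖w‖ ^ 2 ≤ ⟪H w, w⟫) (hupp : ∀ w : F, ⟪H w, w⟫ ≤ b * ‖w‖ ^ 2)
    (v : F) : 1 / b * ‖v‖ ^ 2 ≤ ⟪A v, v⟫ ∧ ⟪A v, v⟫ ≤ 1 / a * ‖v‖ ^ 2 := by
  rcases eq_or_ne v 0 with rfl | hv
  · simp
  set w := A v with hw
  have hHw : H w = v := hHA v
  have hwne : w ≠ 0 := by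
    intro h
    apply hv
    rw [← hHw, h, map_zero]
  have hwpos : (0:ℝ) < ‖w‖ := norm_pos_iff.2 hwne
  have hvpos : (0:ℝ) < ‖v‖ := norm_pos_iff.2 hv
  have hb : 0 < b := by
    have h1 := hlow w
    have h2 := hupp w
    nlinarith [mul_pos ha (pow_pos hwpos 2)]
  have hAvv : ⟪A v, v⟫ = ⟪H w, w⟫ := by
    rw [hHw, real_inner_comm]
  constructor
  · -- lower bound via Cauchy-Schwarz for the form
    have hpsd : ∀ u : F, 0 ≤ ⟪H u, u⟫ := fun u => le_trans (by positivity) (hlow u)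
    have hcs := aux_cs H hsym hpsd w (H w)
    have h1 : ⟪H w, H w⟫ = ‖v‖ ^ 2 := by rw [hHw, real_inner_self_eq_norm_sq]
    have h2 : ⟪H (H w), H w⟫ ≤ b * ‖v‖ ^ 2 := by
      calc ⟪H (H w), H w⟫ ≤ b * ‖H w‖ ^ 2 := hupp _
        _ = b * ‖v‖ ^ 2 := by rw [hHw]
    rw [h1] at hcs
    have h3 : 0 ≤ ⟪H w, w⟫ := hpsd w
    rw [hAvv, div_mul_eq_mul_div, div_le_iff₀ hb]
    nlinarith [mul_le_mul_of_nonneg_left h2 h3, pow_pos hvpos 2]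
  · have h1 : a * ‖w‖ ^ 2 ≤ ⟪H w, w⟫ := hlow w
    have h2 : ⟪H w, w⟫ = ⟪v, w⟫ := by rw [hHw]
    have h3 : ⟪v, w⟫ ≤ ‖v‖ * ‖w‖ := real_inner_le_norm v w
    have h4 : a * ‖w‖ ≤ ‖v‖ := by nlinarith
    rw [hAvv, div_mul_eq_mul_div, le_div_iff₀ ha]
    nlinarith
section MainAux

variable {F : Type*} [NormedAddCommGroup F] [InnerProductSpace ℝ F] [FiniteDimensional ℝ F]

set_option maxHeartbeats 1000000 in
private theorem main_thm (t₀ : ℝ) (ht₀ : 0 ≤ t₀)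
    (f : F → ℝ) (h₁ h₂ : ℝ → ℝ)
    (hconv : ConvexOn ℝ Set.univ f) (hnnf : ∀ ξ, 0 ≤ f ξ) (hcont : Continuous f)
    (hC2 : ContDiffOn ℝ 2 f {ξ | t₀ < ‖ξ‖})
    (hsuper : Filter.Tendsto (fun ξ : F => f ξ / ‖ξ‖) (Filter.comap norm Filter.atTop)
      Filter.atTop)
    (h1pos : ∀ t, t₀ < t → 0 < h₁ t)
    (hhess : ∀ ξ v, t₀ ≤ ‖ξ‖ →
      h₁ ‖ξ‖ * ‖v‖ ^ 2 ≤ ⟪fderiv ℝ (gradient f) ξ v, v⟫ ∧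
      ⟪fderiv ℝ (gradient f) ξ v, v⟫ ≤ h₂ ‖ξ‖ * ‖v‖ ^ 2)
    (fstar : F → ℝ)
    (hfstar : ∀ x, fstar x = ⨆ ξ : F, (⟪x, ξ⟫ - f ξ)) :
    (∀ x, BddAbove (Set.range fun ξ : F => ⟪x, ξ⟫ - f ξ)) ∧
    ∃ s₀ : ℝ, ContDiffOn ℝ 2 fstar {x | s₀ < ‖x‖} ∧
      ∀ x, s₀ ≤ ‖x‖ →
        (∀ v, fderiv ℝ (gradient f) (gradient fstar x) (fderiv ℝ (gradient fstar) x v) = v) ∧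
        ∀ v, (1 / h₂ ‖gradient fstar x‖) * ‖v‖ ^ 2 ≤ ⟪fderiv ℝ (gradient fstar) x v, v⟫ ∧
          ⟪fderiv ℝ (gradient fstar) x v, v⟫ ≤ (1 / h₁ ‖gradient fstar x‖) * ‖v‖ ^ 2 := by
  classical
  have hmaxex : ∀ x : F, ∃ ξ, ∀ η, ⟪x, η⟫ - f η ≤ ⟪x, ξ⟫ - f ξ :=
    fun x => aux_exists_max hcont hsuper x
  choose G hG using hmaxex
  have hbdd : ∀ x, BddAbove (Set.range fun ξ : F => ⟪x, ξ⟫ - f ξ) := fun x =>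
    ⟨⟪x, G x⟫ - f (G x), by rintro y ⟨η, rfl⟩; exact hG x η⟩
  have hfsG : ∀ x, fstar x = ⟪x, G x⟫ - f (G x) := fun x => by
    rw [hfstar x]
    exact le_antisymm (ciSup_le (hG x)) (le_ciSup (hbdd x) (G x))
  refine ⟨hbdd, ?_⟩
  -- the maximum of f on the ball of radius t₀ + 2
  obtain ⟨ξM, hξMmem, hξM⟩ := (isCompact_closedBall (0:F) (t₀+2)).exists_isMaxOn
    ⟨0, Metric.mem_closedBall_self (by linarith)⟩ hcont.continuousOn
  set M := f ξM with hMdef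
  have hM0 : 0 ≤ M := hnnf ξM
  -- norm lower bound for maximizers
  have hmaxnorm : ∀ x ξ, M < ‖x‖ → (∀ η, ⟪x, η⟫ - f η ≤ ⟪x, ξ⟫ - f ξ) → t₀ + 1 < ‖ξ‖ := by
    intro x ξ hx hmax
    by_contra hcon
    push_neg at hcon
    have hxpos : (0:ℝ) < ‖x‖ := lt_of_le_of_lt hM0 hx
    set u : F := ‖x‖⁻¹ • x with hu_def
    have hu : ‖u‖ = 1 := by
      rw [hu_def, norm_smul, norm_inv, norm_norm, inv_mul_cancel₀ hxpos.ne']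
    have hinner : ⟪x, u⟫ = ‖x‖ := by
      rw [hu_def, real_inner_smul_right, real_inner_self_eq_norm_mul_norm]
      field_simp
    have h1 := hmax (ξ + u)
    rw [inner_add_right, hinner] at h1
    have hmem : ξ + u ∈ Metric.closedBall (0:F) (t₀+2) := by
      rw [Metric.mem_closedBall, dist_zero_right]
      calc ‖ξ + u‖ ≤ ‖ξ‖ + ‖u‖ := norm_add_le _ _
        _ ≤ (t₀ + 1) + 1 := by rw [hu]; linarith
        _ = t₀ + 2 := by ring
    have h2 : f (ξ + u) ≤ M := hξM hmem
    have h3 : 0 ≤ f ξ := hnnf ξ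
    linarith
  -- the open region where f is C²
  set U : Set F := {ξ | t₀ < ‖ξ‖} with hUdef
  have hUopen : IsOpen U := isOpen_lt continuous_const continuous_norm
  have hUmem : ∀ {ξ : F}, t₀ < ‖ξ‖ → U ∈ nhds ξ := fun h => hUopen.mem_nhds h
  -- gradient f is C¹ on U
  have hgC1 : ContDiffOn ℝ 1 (gradient f) U := by
    have h1 : ContDiffOn ℝ 1 (fderiv ℝ f) U := hC2.fderiv_of_isOpen hUopen (by norm_num)
    have h2 : ContDiff ℝ 1 ⇑(InnerProductSpace.toDual ℝ F).symm :=
      (InnerProductSpace.toDual ℝ F).symm.toContinuousLinearEquiv.contDiff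
    exact h2.comp_contDiffOn h1
  have hgdiff : ∀ ξ : F, t₀ < ‖ξ‖ → HasFDerivAt (gradient f) (fderiv ℝ (gradient f) ξ) ξ := by
    intro ξ hξ
    exact (((hgC1.contDiffAt (hUmem hξ)).differentiableAt one_ne_zero)).hasFDerivAt
  -- first-order condition at a maximizer
  have hfoc : ∀ x ξ, t₀ < ‖ξ‖ → (∀ η, ⟪x, η⟫ - f η ≤ ⟪x, ξ⟫ - f ξ) → gradient f ξ = x := by
    intro x ξ hξ hmax
    have hdf : DifferentiableAt ℝ f ξ :=
      (hC2.contDiffAt (hUmem hξ)).differentiableAt (by norm_num)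
    have hmin : IsLocalMin (fun η => f η - ⟪x, η⟫) ξ := by
      apply Filter.Eventually.of_forall
      intro η
      simp only
      have := hmax η
      linarith
    have hz := hmin.fderiv_eq_zero
    have hψd : HasFDerivAt (fun η => f η - ⟪x, η⟫) (fderiv ℝ f ξ - innerSL ℝ x) ξ :=
      hdf.hasFDerivAt.sub ((innerSL ℝ x).hasFDerivAt)
    have heq : fderiv ℝ f ξ = innerSL ℝ x := by
      have h5 := hψd.fderiv
      rw [hz] at h5
      exact sub_eq_zero.1 h5.symm
    show (InnerProductSpace.toDual ℝ F).symm (fderiv ℝ f ξ) = x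
    have hxd : InnerProductSpace.toDual ℝ F x = innerSL ℝ x := by
      ext y
      simp [InnerProductSpace.toDual_apply_apply]
    rw [heq, ← hxd, LinearIsometryEquiv.symm_apply_apply]
  -- subgradient inequality: critical points are maximizers
  have hsubgrad : ∀ x ξ, t₀ < ‖ξ‖ → gradient f ξ = x →
      ∀ η, ⟪x, η⟫ - f η ≤ ⟪x, ξ⟫ - f ξ := by
    intro x ξ hξ hgrad η
    have hdf : DifferentiableAt ℝ f ξ :=
      (hC2.contDiffAt (hUmem hξ)).differentiableAt (by norm_num)
    have htan := aux_tangent hconv hdf.hasFDerivAt η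
    have h2 : (fderiv ℝ f ξ) (η - ξ) = ⟪x, η - ξ⟫ := by
      rw [← hgrad]
      exact (InnerProductSpace.toDual_symm_apply).symm
    rw [h2, inner_sub_right] at htan
    linarith
  -- uniqueness of maximizers
  have huniq : ∀ x, M < ‖x‖ → ∀ ξ', (∀ η, ⟪x, η⟫ - f η ≤ ⟪x, ξ'⟫ - f ξ') → ξ' = G x := by
    intro x hx ξ' hmax'
    by_contra hne
    have hmax₁ := hG x
    have hn1 : t₀ + 1 < ‖G x‖ := hmaxnorm x (G x) hx hmax₁
    have hn2 : t₀ + 1 < ‖ξ'‖ := hmaxnorm x ξ' hx hmax'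
    set ξ₁ := G x with hξ₁def
    set d : F := ξ' - ξ₁ with hd_def
    have hdne : d ≠ 0 := sub_ne_zero.2 hne
    have hdpos : (0:ℝ) < ‖d‖ := norm_pos_iff.2 hdne
    set ε := min 1 ((‖ξ₁‖ - t₀) / (2 * ‖d‖)) with hε_def
    have hεpos : 0 < ε := lt_min zero_lt_one (div_pos (by linarith) (by positivity))
    have hseg : ∀ t ∈ Set.Icc (0:ℝ) ε, t₀ < ‖ξ₁ + t • d‖ := by
      rintro t ⟨ht0, htε⟩
      have h1 : ‖ξ₁‖ - t * ‖d‖ ≤ ‖ξ₁ + t • d‖ := by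
        have h2 : ‖ξ₁‖ ≤ ‖ξ₁ + t • d‖ + ‖t • d‖ := by
          calc ‖ξ₁‖ = ‖(ξ₁ + t • d) - t • d‖ := by rw [add_sub_cancel_right]
            _ ≤ ‖ξ₁ + t • d‖ + ‖t • d‖ := norm_sub_le _ _
        rw [norm_smul, Real.norm_eq_abs, abs_of_nonneg ht0] at h2
        linarith
      have h2 : t * ‖d‖ ≤ (‖ξ₁‖ - t₀) / 2 := by
        have h3 : t ≤ (‖ξ₁‖ - t₀) / (2 * ‖d‖) := le_trans htε (min_le_right _ _)
        have h4 : t * ‖d‖ ≤ ((‖ξ₁‖ - t₀) / (2 * ‖d‖)) * ‖d‖ := by nlinarith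
        have h5 : ((‖ξ₁‖ - t₀) / (2 * ‖d‖)) * ‖d‖ = (‖ξ₁‖ - t₀) / 2 := by
          field_simp
        linarith
      linarith
    have hsegmax : ∀ t ∈ Set.Icc (0:ℝ) 1, ∀ η, ⟪x, η⟫ - f η ≤ ⟪x, ξ₁ + t • d⟫ - f (ξ₁ + t • d) := by
      rintro t ⟨ht0, ht1⟩ η
      have hconv2 := hconv.2 (Set.mem_univ ξ₁) (Set.mem_univ ξ')
        (show (0:ℝ) ≤ 1 - t by linarith) ht0 (by ring)
      have hpt : (1-t) • ξ₁ + t • ξ' = ξ₁ + t • d := by rw [hd_def]; module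
      rw [hpt] at hconv2
      simp only [smul_eq_mul] at hconv2
      have e1 : ⟪x, ξ₁ + t • d⟫ = (1-t) * ⟪x, ξ₁⟫ + t * ⟪x, ξ'⟫ := by
        rw [hd_def, inner_add_right, real_inner_smul_right, inner_sub_right]
        ring
      have hM1 : ⟪x, ξ'⟫ - f ξ' = ⟪x, ξ₁⟫ - f ξ₁ := le_antisymm (hmax₁ ξ') (hmax' ξ₁)
      have hη := hmax₁ η
      nlinarith [hconv2, e1, hM1, hη]
    have hgseg : ∀ t ∈ Set.Icc (0:ℝ) ε, gradient f (ξ₁ + t • d) = x := by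
      intro t ht
      exact hfoc x _ (hseg t ht)
        (hsegmax t ⟨ht.1, le_trans ht.2 (min_le_left _ _)⟩)
    have hgd : HasFDerivAt (gradient f) (fderiv ℝ (gradient f) ξ₁) ξ₁ :=
      hgdiff ξ₁ (by linarith)
    have hc : HasDerivAt (fun t : ℝ => ξ₁ + t • d) d 0 := by
      simpa using ((hasDerivAt_id (0:ℝ)).smul_const d).const_add ξ₁
    have hcomp : HasDerivAt (fun t : ℝ => gradient f (ξ₁ + t • d))
        (fderiv ℝ (gradient f) ξ₁ d) 0 := by
      have hgd' : HasFDerivAt (gradient f) (fderiv ℝ (gradient f) ξ₁) (ξ₁ + (0:ℝ) • d) := by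
        simpa using hgd
      simpa [Function.comp_def] using hgd'.comp_hasDerivAt 0 hc
    have hq : HasDerivAt (fun t : ℝ => ⟪gradient f (ξ₁ + t • d), d⟫)
        (⟪fderiv ℝ (gradient f) ξ₁ d, d⟫) 0 := by
      simpa using HasDerivAt.inner ℝ hcomp (hasDerivAt_const (0:ℝ) d)
    have hd1 : HasDerivWithinAt (fun t : ℝ => ⟪gradient f (ξ₁ + t • d), d⟫)
        (⟪fderiv ℝ (gradient f) ξ₁ d, d⟫) (Set.Icc 0 ε) 0 := hq.hasDerivWithinAt
    have hqconst : ∀ t ∈ Set.Icc (0:ℝ) ε, ⟪gradient f (ξ₁ + t • d), d⟫ = ⟪x, d⟫ := by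
      intro t ht
      rw [hgseg t ht]
    have hd2 : HasDerivWithinAt (fun t : ℝ => ⟪gradient f (ξ₁ + t • d), d⟫)
        0 (Set.Icc 0 ε) 0 := by
      exact (hasDerivWithinAt_const (0:ℝ) (Set.Icc 0 ε) (⟪x, d⟫ : ℝ)).congr hqconst
        (hqconst 0 (Set.left_mem_Icc.2 hεpos.le))
    have hud : UniqueDiffWithinAt ℝ (Set.Icc (0:ℝ) ε) 0 :=
      (uniqueDiffOn_Icc hεpos) 0 (Set.left_mem_Icc.2 hεpos.le)
    have hzero : ⟪fderiv ℝ (gradient f) ξ₁ d, d⟫ = (0:ℝ) := by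
      rw [← hd1.derivWithin hud, hd2.derivWithin hud]
    have hlow := (hhess ξ₁ d (by linarith)).1
    have hpos := h1pos ‖ξ₁‖ (by linarith)
    nlinarith [hlow, hpos, hdpos, pow_pos hdpos 2]
  -- symmetry of the Hessian
  have hsymH : ∀ ξ : F, t₀ < ‖ξ‖ →
      ∀ v w, ⟪fderiv ℝ (gradient f) ξ v, w⟫ = ⟪fderiv ℝ (gradient f) ξ w, v⟫ := by
    intro ξ hξ v w
    set T : F →L[ℝ] F →L[ℝ] ℝ :=
      (isBoundedBilinearMap_inner (𝕜 := ℝ) (E := F)).toContinuousLinearMap with hTdef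
    have hT : ∀ a b : F, T a b = ⟪a, b⟫ := fun a b => rfl
    have heq : (fderiv ℝ f) = fun y => T (gradient f y) := by
      funext y
      ext w'
      rw [hT]
      exact (InnerProductSpace.toDual_symm_apply).symm
    have hdd : HasFDerivAt (fderiv ℝ f) (T.comp (fderiv ℝ (gradient f) ξ)) ξ := by
      rw [heq]
      exact T.hasFDerivAt.comp ξ (hgdiff ξ hξ)
    have hev : ∀ᶠ y in nhds ξ, HasFDerivAt f (fderiv ℝ f y) y := by
      filter_upwards [hUmem hξ] with y hy
      exact ((hC2.contDiffAt (hUmem hy)).differentiableAt (by norm_num)).hasFDerivAt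
    have hsymm := second_derivative_symmetric_of_eventually hev hdd v w
    simpa [ContinuousLinearMap.comp_apply, hT] using hsymm
  -- key local statement
  have key : ∀ x₀, M < ‖x₀‖ → ∃ A : F →L[ℝ] F, ContDiffAt ℝ 1 G x₀ ∧ HasFDerivAt G A x₀ ∧
      ∀ v, fderiv ℝ (gradient f) (G x₀) (A v) = v := by
    intro x₀ hx₀
    have hξ₀n : t₀ + 1 < ‖G x₀‖ := hmaxnorm x₀ (G x₀) hx₀ (hG x₀)
    have hξ₀U : t₀ < ‖G x₀‖ := by linarith
    have hgx₀ : gradient f (G x₀) = x₀ := hfoc x₀ (G x₀) hξ₀U (hG x₀)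
    have hca : ContDiffAt ℝ 1 (gradient f) (G x₀) := hgC1.contDiffAt (hUmem hξ₀U)
    have hgd := hgdiff (G x₀) hξ₀U
    have hinj : Function.Injective (fderiv ℝ (gradient f) (G x₀)) := by
      intro v w hvw
      have hsub : fderiv ℝ (gradient f) (G x₀) (v - w) = 0 := by
        rw [map_sub, hvw, sub_self]
      have hlow := (hhess (G x₀) (v - w) (by linarith)).1
      rw [hsub] at hlow
      simp only [inner_zero_left] at hlow
      have hpos := h1pos ‖G x₀‖ hξ₀U
      have hz : v - w = 0 := by
        by_contra hcon
        have hnp : (0:ℝ) < ‖v - w‖ := norm_pos_iff.2 hcon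
        nlinarith [mul_pos hpos (pow_pos hnp 2)]
      exact sub_eq_zero.1 hz
    set Φ : F ≃L[ℝ] F :=
      (LinearEquiv.ofInjectiveEndo ((fderiv ℝ (gradient f) (G x₀)) : F →ₗ[ℝ] F)
        hinj).toContinuousLinearEquiv with hΦdef
    have hΦcoe : (Φ : F →L[ℝ] F) = fderiv ℝ (gradient f) (G x₀) := by
      ext v
      rfl
    have hgdΦ : HasFDerivAt (gradient f) (Φ : F →L[ℝ] F) (G x₀) := by
      rw [hΦcoe]
      exact hgd
    have hstrict : HasStrictFDerivAt (gradient f) (Φ : F →L[ℝ] F) (G x₀) :=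
      hca.hasStrictFDerivAt' hgdΦ one_ne_zero
    set ℓ := hstrict.localInverse (gradient f) Φ (G x₀) with hℓdef
    have hlinv0 : ∀ᶠ y in nhds x₀, gradient f (ℓ y) = y := by
      have := hstrict.eventually_right_inverse
      rwa [hgx₀] at this
    have hℓx₀ : ℓ x₀ = G x₀ := by
      have := hstrict.localInverse_apply_image
      rwa [hgx₀] at this
    have hℓcd : ContDiffAt ℝ 1 ℓ x₀ := by
      have h := hca.to_localInverse hgdΦ one_ne_zero
      rw [hgx₀] at h
      exact h
    have hℓc : ContinuousAt ℓ x₀ := hℓcd.continuousAt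
    have hnear : G =ᶠ[nhds x₀] ℓ := by
      have h1 : ∀ᶠ y in nhds x₀, ℓ y ∈ U := hℓc.eventually_mem (by rw [hℓx₀]; exact hUmem hξ₀U)
      have h2 : ∀ᶠ y in nhds x₀, y ∈ {y : F | M < ‖y‖} :=
        (isOpen_lt continuous_const continuous_norm).mem_nhds hx₀
      filter_upwards [h1, h2, hlinv0] with y hy1 hy2 hy3
      exact (huniq y hy2 (ℓ y) (hsubgrad y (ℓ y) hy1 hy3)).symm
    refine ⟨(Φ.symm : F →L[ℝ] F), hℓcd.congr_of_eventuallyEq hnear, ?_, ?_⟩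
    · have h := hstrict.to_localInverse
      rw [hgx₀] at h
      exact h.hasFDerivAt.congr_of_eventuallyEq hnear
    · intro v
      have h5 : (fderiv ℝ (gradient f) (G x₀)) (Φ.symm v) = Φ (Φ.symm v) := by
        rw [← hΦcoe]
        rfl
      rw [show ((Φ.symm : F →L[ℝ] F) v) = Φ.symm v from rfl, h5, Φ.apply_symm_apply]
  -- envelope: fstar has gradient G x at x
  have hgrad : ∀ x₀, M < ‖x₀‖ → HasGradientAt fstar (G x₀) x₀ := by
    intro x₀ hx₀
    obtain ⟨A, hGc1, hGd, hAinv⟩ := key x₀ hx₀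
    have hGcont : ContinuousAt G x₀ := hGc1.continuousAt
    rw [hasGradientAt_iff_hasFDerivAt, hasFDerivAt_iff_isLittleO_nhds_zero,
      Asymptotics.isLittleO_iff]
    intro c hc
    have hev0 : ∀ᶠ y in nhds x₀, ‖G y - G x₀‖ < c := by
      have ht : Filter.Tendsto (fun y => G y - G x₀) (nhds x₀) (nhds (G x₀ - G x₀)) :=
        hGcont.tendsto.sub tendsto_const_nhds
      rw [sub_self] at ht
      have ht2 := ht.norm
      simp only [norm_zero] at ht2
      exact ht2.eventually_lt_const hc
    have hmap : Filter.Tendsto (fun h : F => x₀ + h) (nhds 0) (nhds x₀) := by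
      simpa [Pi.add_def] using (continuous_const.add continuous_id :
        Continuous fun h : F => x₀ + h).tendsto 0
    have hmain : ∀ y, ‖G y - G x₀‖ < c →
        ‖fstar y - fstar x₀ - ⟪G x₀, y - x₀⟫‖ ≤ c * ‖y - x₀‖ := by
      intro y hy
      have hy1 := hG y (G x₀)
      have hy2 := hG x₀ (G y)
      have hfy := hfsG y
      have hfx := hfsG x₀
      have c1 : ⟪y, G x₀⟫ = ⟪G x₀, y⟫ := real_inner_comm _ _
      have c2 : ⟪x₀, G x₀⟫ = ⟪G x₀, x₀⟫ := real_inner_comm _ _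
      have c3 : ⟪x₀, G y⟫ = ⟪G y, x₀⟫ := real_inner_comm _ _
      have c4 : ⟪y, G y⟫ = ⟪G y, y⟫ := real_inner_comm _ _
      have hexp : ⟪G y - G x₀, y - x₀⟫
          = ⟪G y, y⟫ - ⟪G y, x₀⟫ - ⟪G x₀, y⟫ + ⟪G x₀, x₀⟫ := by
        rw [inner_sub_left, inner_sub_right, inner_sub_right]
        ring
      have hlo : 0 ≤ fstar y - fstar x₀ - (⟪G x₀, y⟫ - ⟪G x₀, x₀⟫) := by linarith
      have hup : fstar y - fstar x₀ - (⟪G x₀, y⟫ - ⟪G x₀, x₀⟫) ≤ ⟪G y - G x₀, y - x₀⟫ := by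
        rw [hexp]
        linarith
      have hcs := real_inner_le_norm (G y - G x₀) (y - x₀)
      have e1 : ⟪G x₀, y - x₀⟫ = ⟪G x₀, y⟫ - ⟪G x₀, x₀⟫ := inner_sub_right _ _ _
      rw [e1, Real.norm_eq_abs, abs_of_nonneg hlo]
      have hnn : (0:ℝ) ≤ ‖y - x₀‖ := norm_nonneg _
      nlinarith [hy.le, mul_le_mul_of_nonneg_right hy.le hnn]
    filter_upwards [hmap.eventually hev0] with h hh
    have hfin := hmain (x₀ + h) hh
    simpa [add_sub_cancel_left, InnerProductSpace.toDual_apply_apply] using hfin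
  have hgradeq : ∀ x, M < ‖x‖ → gradient fstar x = G x := fun x hx => (hgrad x hx).gradient
  have hΩopen : IsOpen {x : F | M < ‖x‖} := isOpen_lt continuous_const continuous_norm
  -- C² regularity of fstar on the region
  have hC2fstar : ContDiffOn ℝ 2 fstar {x : F | M < ‖x‖} := by
    have h2eq : (2 : WithTop ℕ∞) = 1 + 1 := by norm_num
    rw [h2eq, contDiffOn_succ_iff_fderiv_of_isOpen hΩopen]
    refine ⟨fun x hx => (hgrad x hx).hasFDerivAt.differentiableAt.differentiableWithinAt,
      ?_, ?_⟩
    · intro h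
      norm_num at h
    · set T : F →L[ℝ] F →L[ℝ] ℝ :=
        (isBoundedBilinearMap_inner (𝕜 := ℝ) (E := F)).toContinuousLinearMap with hTdef
      have hTG : ContDiffOn ℝ 1 (fun x => T (G x)) {x : F | M < ‖x‖} := by
        intro x hx
        exact (T.contDiff.comp_contDiffAt x (key x hx).choose_spec.1).contDiffWithinAt
      apply hTG.congr
      intro x hx
      rw [(hgrad x hx).hasFDerivAt.fderiv]
      ext w
      rfl
  refine ⟨M + 1, hC2fstar.mono (fun x hx => by simp only [Set.mem_setOf_eq] at *; linarith), ?_⟩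
  intro x hx
  have hxM : M < ‖x‖ := by linarith
  obtain ⟨A, hGc1, hGd, hAinv⟩ := key x hxM
  have hfd_eq : fderiv ℝ (gradient fstar) x = A := by
    have hev : gradient fstar =ᶠ[nhds x] G := by
      filter_upwards [hΩopen.mem_nhds hxM] with y hy
      exact hgradeq y hy
    rw [hev.fderiv_eq, hGd.fderiv]
  have hGnorm : t₀ + 1 < ‖G x‖ := hmaxnorm x (G x) hxM (hG x)
  constructor
  · intro v
    rw [hgradeq x hxM, hfd_eq]
    exact hAinv v
  · intro v
    rw [hgradeq x hxM, hfd_eq]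
    have hb := aux_bounds (fderiv ℝ (gradient f) (G x)) A hAinv
      (hsymH (G x) (by linarith)) (h1pos ‖G x‖ (by linarith))
      (fun w => (hhess (G x) w (by linarith)).1) (fun w => (hhess (G x) w (by linarith)).2) v
    exact hb

end MainAux

/-- Regularity and Hessian bounds for the Fenchel conjugate of a uniformly convex
function with fast growth (Proposition on the polar function). -/
theorem stmt17 (n : ℕ) (hn : 2 ≤ n) (t₀ : ℝ) (ht₀ : 0 ≤ t₀)
    (f : EuclideanSpace ℝ (Fin n) → ℝ) (h₁ h₂ : ℝ → ℝ)
    (hconv : ConvexOn ℝ Set.univ f) (hnnf : ∀ ξ, 0 ≤ f ξ) (hcont : Continuous f)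
    (hC2 : ContDiffOn ℝ 2 f {ξ | t₀ < ‖ξ‖})
    (hsuper : Filter.Tendsto (fun ξ : EuclideanSpace ℝ (Fin n) => f ξ / ‖ξ‖)
      (Filter.comap norm Filter.atTop) Filter.atTop)
    (hm1 : MonotoneOn h₁ (Set.Ici 0)) (hm2 : MonotoneOn h₂ (Set.Ici 0))
    (h1pos : ∀ t, t₀ < t → 0 < h₁ t)
    (hhess : ∀ ξ v, t₀ ≤ ‖ξ‖ →
      h₁ ‖ξ‖ * ‖v‖ ^ 2 ≤ ⟪fderiv ℝ (gradient f) ξ v, v⟫ ∧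
      ⟪fderiv ℝ (gradient f) ξ v, v⟫ ≤ h₂ ‖ξ‖ * ‖v‖ ^ 2)
    (fstar : EuclideanSpace ℝ (Fin n) → ℝ)
    (hfstar : ∀ x, fstar x = ⨆ ξ : EuclideanSpace ℝ (Fin n), (⟪x, ξ⟫ - f ξ)) :
    (∀ x, BddAbove (Set.range fun ξ : EuclideanSpace ℝ (Fin n) => ⟪x, ξ⟫ - f ξ)) ∧
    ∃ s₀ : ℝ, ContDiffOn ℝ 2 fstar {x | s₀ < ‖x‖} ∧
      ∀ x, s₀ ≤ ‖x‖ →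
        (∀ v, fderiv ℝ (gradient f) (gradient fstar x) (fderiv ℝ (gradient fstar) x v) = v) ∧
        ∀ v, (1 / h₂ ‖gradient fstar x‖) * ‖v‖ ^ 2 ≤ ⟪fderiv ℝ (gradient fstar) x v, v⟫ ∧
          ⟪fderiv ℝ (gradient fstar) x v, v⟫ ≤ (1 / h₁ ‖gradient fstar x‖) * ‖v‖ ^ 2 :=
  main_thm t₀ ht₀ f h₁ h₂ hconv hnnf hcont hC2 hsuper h1pos hhess fstar hfstar
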